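/- Let n be a positive integer with n ≡ 2 (mod 6) or n ≡ 4 (mod 6). Then the cokernel group G_n is isomorphic to ℤ/3ℤ. -/

import Mathlib

open Matrix

/-- The adjacency matrix of the Cayley graph `C_n` of `ℤ/nℤ` with respect to `{1, n-1}`. -/
def cayleyAdj (n : ℕ) : Matrix (ZMod n) (ZMod n) ℤ :=
  Matrix.of fun i j => (if j = i + 1 then 1 else 0) + (if j = i - 1 then 1 else 0)

/-- The matrix `B_n = I - A_nᵀ`. -/
def cayleyB (n : ℕ) : Matrix (ZMod n) (ZMod n) ℤ :=
  1 - (cayleyAdj n)ᵀ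

/-- The image of `B_n`, viewed as a linear map by matrix-vector multiplication. -/
def imB (n : ℕ) [NeZero n] : Submodule ℤ (ZMod n → ℤ) :=
  LinearMap.range (cayleyB n).mulVecLin

/-- The cokernel group `G_n = (ZMod n → ℤ) ⧸ Im(B_n)`. -/
abbrev cayleyCoker (n : ℕ) [NeZero n] : Type :=
  (ZMod n → ℤ) ⧸ imB n

/-- The class `[e_i]` of the standard basis vector `e_i` in `G_n`. -/
def eClass (n : ℕ) [NeZero n] (i : ZMod n) : cayleyCoker n :=
  Submodule.Quotient.mk (Pi.single i 1)

/-! The relations of `G_n` read `e_j = e_{j+1} + e_{j-1}`, hence `e_{j+3} = -e_j`. For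
`n ≡ 2, 4 (mod 6)` the residue `3` has an odd inverse `k` modulo `n`, so
`e_{j+1} = e_{j+3k} = (-1)^k e_j = -e_j`; the relation then gives `3 e_j = 0`, and the class
of `x` is `(∑ (-1)^i x_i) • e_0`. Conversely, since `n` is even, this alternating sum reduced
mod `3` kills every column `e_j - e_{j+1} - e_{j-1}` of `B_n`, so `Im B_n` is exactly the kernel
of that surjection onto `ZMod 3`. -/

section Recurrence

variable {R M : Type*} [Ring R] [AddCommGroup M] {f : R → M}

theorem apply_add_three_eq_neg (hf : ∀ j, f j = f (j + 1) + f (j - 1)) (j : R) :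
    f (j + 3) = -f j := by
  have h1 : f (j + 1) = f (j + 2) + f j := by
    rw [hf (j + 1), add_sub_cancel_right, add_assoc, one_add_one_eq_two]
  have h2 : f (j + 2) = f (j + 3) + f (j + 1) := by
    rw [hf (j + 2)]; congr 2 <;> norm_num [add_assoc, add_sub_assoc]
  linear_combination (norm := module) -h1 - h2

theorem apply_add_three_mul_eq_neg_one_pow_smul (hf : ∀ j, f j = f (j + 1) + f (j - 1)) (j : R)
    (k : ℕ) : f (j + 3 * k) = (-1 : ℤ) ^ k • f j := by
  induction k with
  | zero => simp
  | succ k ih =>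
    rw [Nat.cast_succ, mul_add_one, ← add_assoc, apply_add_three_eq_neg hf, ih, pow_succ,
      mul_neg_one, neg_smul]

theorem apply_add_one_eq_neg (hf : ∀ j, f j = f (j + 1) + f (j - 1)) {k : ℕ} (hk : Odd k)
    (h3k : 3 * (k : R) = 1) (j : R) : f (j + 1) = -f j := by
  rw [← h3k, apply_add_three_mul_eq_neg_one_pow_smul hf, hk.neg_one_pow, neg_one_smul]

theorem three_nsmul_apply_eq_zero (hf : ∀ j, f j = f (j + 1) + f (j - 1))
    (hneg : ∀ j, f (j + 1) = -f j) (j : R) : 3 • f j = 0 := by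
  have h : f j = -f (j - 1) := by simpa using hneg (j - 1)
  linear_combination (norm := module) hf j + h + hneg j

theorem apply_natCast_eq_neg_one_pow_smul (hneg : ∀ j, f (j + 1) = -f j) (k : ℕ) :
    f k = (-1 : ℤ) ^ k • f 0 := by
  induction k with
  | zero => simp
  | succ k ih => rw [Nat.cast_succ, hneg, ih, pow_succ, mul_neg_one, neg_smul]

end Recurrence

theorem neg_one_pow_val_add_one {R : Type*} [Ring R] {n : ℕ} [NeZero n] (hn : Even n)
    (i : ZMod n) : (-1 : R) ^ (i + 1).val = -(-1) ^ i.val := by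
  have hn1 : 1 < n := by
    obtain ⟨m, rfl⟩ := hn
    have := NeZero.ne (m + m)
    omega
  rw [ZMod.val_add, ZMod.val_one_eq_one_mod, Nat.mod_eq_of_lt hn1, neg_one_pow_eq_pow_mod_two,
    Nat.mod_mod_of_dvd _ hn.two_dvd, ← neg_one_pow_eq_pow_mod_two, pow_succ, mul_neg_one]

theorem cayleyB_mulVec_single (n : ℕ) [NeZero n] (j : ZMod n) :
    cayleyB n *ᵥ Pi.single j 1 = Pi.single j 1 - Pi.single (j + 1) 1 - Pi.single (j - 1) 1 := by
  ext i
  simp only [mulVec_single_one, col_apply, cayleyB, cayleyAdj, Matrix.sub_apply, one_apply,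
    transpose_apply, of_apply, Pi.sub_apply, Pi.single_apply]
  ring

theorem eClass_eq_add (n : ℕ) [NeZero n] (j : ZMod n) :
    eClass n j = eClass n (j + 1) + eClass n (j - 1) := by
  have h := (Submodule.Quotient.mk_eq_zero (imB n)).mpr
    (LinearMap.mem_range_self (cayleyB n).mulVecLin (Pi.single j 1))
  rw [mulVecLin_apply, cayleyB_mulVec_single, Submodule.Quotient.mk_sub,
    Submodule.Quotient.mk_sub, sub_sub, sub_eq_zero] at h
  exact h

theorem exists_odd_three_mul_eq_one {n : ℕ} (h : n % 6 = 2 ∨ n % 6 = 4) :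
    ∃ k : ℕ, Odd k ∧ 3 * (k : ZMod n) = 1 := by
  rcases h with h | h
  · refine ⟨2 * (n / 6) + 1, odd_two_mul_add_one _, ?_⟩
    have : 3 * (2 * (n / 6) + 1) = n + 1 := by omega
    exact_mod_cast (congrArg (Nat.cast : ℕ → ZMod n) this).trans (by simp)
  · refine ⟨2 * (2 * (n / 6) + 1) + 1, odd_two_mul_add_one _, ?_⟩
    have : 3 * (2 * (2 * (n / 6) + 1) + 1) = 2 * n + 1 := by omega
    exact_mod_cast (congrArg (Nat.cast : ℕ → ZMod n) this).trans (by simp)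

def alternatingSum (n : ℕ) [NeZero n] : (ZMod n → ℤ) →ₗ[ℤ] ℤ :=
  Fintype.linearCombination ℤ fun i : ZMod n => (-1) ^ i.val

def alternatingSumModThree (n : ℕ) [NeZero n] : (ZMod n → ℤ) →ₗ[ℤ] ZMod 3 :=
  (Int.castAddHom (ZMod 3)).toIntLinearMap ∘ₗ alternatingSum n

theorem alternatingSum_cayleyB_mulVec_single {n : ℕ} [NeZero n] (hn : Even n) (j : ZMod n) :
    alternatingSum n (cayleyB n *ᵥ Pi.single j 1) = 3 * (-1) ^ j.val := by
  have hprev : (-1 : ℤ) ^ (j - 1).val = -(-1) ^ j.val := by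
    have h := neg_one_pow_val_add_one (R := ℤ) hn (j - 1)
    rw [sub_add_cancel] at h
    rw [h, neg_neg]
  simp only [cayleyB_mulVec_single, map_sub, alternatingSum,
    Fintype.linearCombination_apply_single, one_smul, neg_one_pow_val_add_one hn, hprev]
  ring

theorem imB_le_ker_alternatingSumModThree {n : ℕ} [NeZero n] (hn : Even n) :
    imB n ≤ LinearMap.ker (alternatingSumModThree n) := by
  rw [imB, LinearMap.range_le_ker_iff]
  refine LinearMap.pi_ext' fun j => LinearMap.ext_ring ?_
  simp only [LinearMap.comp_apply, LinearMap.coe_single, mulVecLin_apply, LinearMap.zero_apply]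
  change ((alternatingSum n (cayleyB n *ᵥ Pi.single j 1) : ℤ) : ZMod 3) = 0
  rw [alternatingSum_cayleyB_mulVec_single hn, Int.cast_mul]
  exact zero_mul _

theorem alternatingSumModThree_surjective {n : ℕ} [NeZero n] :
    Function.Surjective (alternatingSumModThree n) := by
  intro y
  obtain ⟨k, rfl⟩ := ZMod.intCast_surjective y
  exact ⟨Pi.single 0 k, by simp [alternatingSumModThree, alternatingSum]⟩

theorem eClass_add_one {n : ℕ} [NeZero n] (h : n % 6 = 2 ∨ n % 6 = 4) (j : ZMod n) :
    eClass n (j + 1) = -eClass n j := by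
  obtain ⟨k, hk, h3k⟩ := exists_odd_three_mul_eq_one h
  exact apply_add_one_eq_neg (eClass_eq_add n) hk h3k j

theorem eClass_eq_neg_one_pow_smul {n : ℕ} [NeZero n] (h : n % 6 = 2 ∨ n % 6 = 4)
    (i : ZMod n) :
    eClass n i = (-1 : ℤ) ^ i.val • eClass n 0 := by
  simpa using apply_natCast_eq_neg_one_pow_smul (eClass_add_one h) i.val

theorem three_nsmul_eClass_zero {n : ℕ} [NeZero n] (h : n % 6 = 2 ∨ n % 6 = 4) :
    3 • eClass n 0 = 0 :=
  three_nsmul_apply_eq_zero (eClass_eq_add n) (eClass_add_one h) 0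

theorem mk_eq_alternatingSum_smul {n : ℕ} [NeZero n] (h : n % 6 = 2 ∨ n % 6 = 4)
    (x : ZMod n → ℤ) :
    (Submodule.Quotient.mk x : cayleyCoker n) = alternatingSum n x • eClass n 0 := by
  suffices (imB n).mkQ = LinearMap.toSpanSingleton ℤ _ (eClass n 0) ∘ₗ alternatingSum n from
    LinearMap.congr_fun this x
  refine LinearMap.pi_ext' fun i => LinearMap.ext_ring ?_
  simp only [LinearMap.comp_apply, LinearMap.coe_single, Submodule.mkQ_apply,
    LinearMap.toSpanSingleton_apply, alternatingSum, Fintype.linearCombination_apply_single,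
    one_smul]
  exact eClass_eq_neg_one_pow_smul h i

theorem ker_alternatingSumModThree_le_imB {n : ℕ} [NeZero n] (h : n % 6 = 2 ∨ n % 6 = 4) :
    LinearMap.ker (alternatingSumModThree n) ≤ imB n := by
  intro x hx
  obtain ⟨c, hc⟩ := (ZMod.intCast_zmod_eq_zero_iff_dvd _ 3).mp hx
  rw [← Submodule.Quotient.mk_eq_zero, mk_eq_alternatingSum_smul h, hc, mul_comm, mul_smul,
    natCast_zsmul, three_nsmul_eClass_zero h, smul_zero]

theorem coker_zmod_three_of_two_or_four_mod_six (n : ℕ) [NeZero n]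
    (h : n % 6 = 2 ∨ n % 6 = 4) :
    Nonempty (cayleyCoker n ≃+ ZMod 3) := by
  have hn : Even n := by rw [Nat.even_iff]; omega
  have hker : imB n = LinearMap.ker (alternatingSumModThree n) :=
    le_antisymm (imB_le_ker_alternatingSumModThree hn) (ker_alternatingSumModThree_le_imB h)
  exact ⟨((Submodule.quotEquivOfEq _ _ hker).trans
    ((alternatingSumModThree n).quotKerEquivOfSurjective
      alternatingSumModThree_surjective)).toAddEquiv⟩
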